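/- arXiv:1301.1947 — 2 statements merged into one kernel-verified Lean document; each statement's English description precedes it below -/
import Mathlib

section
/- For any δ > 0 there is a constant C_δ such that for every Schwartz function u on ℝ, ‖[H, u_x] u_x‖_{L∞} + ‖[H, u] u_{xx}‖_{L∞} ≤ C_δ ‖u_x‖²_{H^{1/2+δ}}. -/
open MeasureTheory SchwartzMap FourierTransform

noncomputable section

/-- The Hilbert transform on ℝ, the Fourier multiplier with symbol `-i · sgn ξ`. -/
def hilbert (f : ℝ → ℂ) : ℝ → ℂ :=
  𝓕⁻ (fun ξ => (-Complex.I) * (Real.sign ξ : ℂ) * 𝓕 f ξ)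

/-- The commutator `[H, a] f = H (a f) - a · H f`. -/
def hcomm (a f : ℝ → ℂ) : ℝ → ℂ := fun x => hilbert (fun y => a y * f y) x - a x * hilbert f x

/-- The `L²` norm. -/
def L2 (f : ℝ → ℂ) : ℝ := (eLpNorm f 2 volume).toReal

/-- The `L^∞` norm. -/
def Loo (f : ℝ → ℂ) : ℝ := (eLpNorm f ⊤ volume).toReal

/-- The `L^p` norm. -/
def LpN (p : ℝ) (f : ℝ → ℂ) : ℝ := (eLpNorm f (ENNReal.ofReal p) volume).toReal

/-- The `H^s` Sobolev norm, `‖(1+ξ²)^{s/2} f̂‖_{L²}`. -/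
def sobolev (s : ℝ) (f : ℝ → ℂ) : ℝ :=
  (eLpNorm (fun ξ => (((1 + ξ ^ 2) ^ (s / 2) : ℝ) : ℂ) * 𝓕 f ξ) 2 volume).toReal

/-- The `L²` pairing `⟨f, g⟩ = ∫ f g`. -/
def pairL2 (f g : ℝ → ℂ) : ℂ := ∫ x : ℝ, f x * g x

end

/-!
For Schwartz `a, f` and a bounded Fourier multiplier `T_m`, the convolution theorem gives
`(T_m (a f) - a T_m f)^(ξ) = ∫ (m ξ - m η) â(ξ - η) f̂(η) dη`, so `‖[T_m, a] f‖_∞` is at most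
`∬ |m ξ - m η| |â(ξ - η)| |f̂(η)|`. For the Hilbert transform `m = -i sgn`, the symbol difference
vanishes unless `ξ` and `η` have opposite signs, and then `|η| ≤ |ξ - η|`: the derivative on
`u_xx` can be moved onto `u`. Both commutators are thus bounded by `2 ‖(u_x)^‖₁²`, and by
Cauchy–Schwarz `‖ĝ‖₁ ≤ ‖(1 + ξ²)^(-s/2)‖₂ ‖g‖_{H^s}`, which is finite exactly when `s > 1/2`.
-/

open Convolution ContinuousLinearMap

section FourierMultiplier

variable {V : Type*} [NormedAddCommGroup V] [InnerProductSpace ℝ V] [FiniteDimensional ℝ V]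
  [MeasurableSpace V] [BorelSpace V]

theorem fourierInv_convolution_mul {A B : V → ℂ} (hA : Integrable A) (hB : Integrable B) (x : V) :
    𝓕⁻ (A ⋆[mul ℂ ℂ] B) x = 𝓕⁻ A x * 𝓕⁻ B x := by
  simp only [Real.fourierInv_eq_fourier_neg, Real.fourier_mul_convolution_eq hA hB]

theorem SchwartzMap.fourier_mul_eq_convolution (a f : 𝓢(V, ℂ)) :
    𝓕 (fun y => a y * f y) = 𝓕 ⇑a ⋆[mul ℂ ℂ] 𝓕 ⇑f := by
  set c := SchwartzMap.convolution (mul ℂ ℂ) (𝓕 a) (𝓕 f)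
  have hc : ⇑c = 𝓕 ⇑a ⋆[mul ℂ ℂ] 𝓕 ⇑f := funext (convolution_apply _ _ _)
  have hinv : (fun y => a y * f y) = ⇑(𝓕⁻ c : 𝓢(V, ℂ)) := by
    ext y
    rw [fourierInv_coe, hc, ← fourier_coe, ← fourier_coe,
      fourierInv_convolution_mul (𝓕 a).integrable (𝓕 f).integrable, ← fourierInv_coe,
      ← fourierInv_coe, fourierInv_fourier_eq, fourierInv_fourier_eq]
  rw [hinv, ← fourier_coe, fourier_fourierInv_eq, hc]

theorem norm_fourierInv_sub_le {g₁ g₂ : V → ℂ} (h₁ : Integrable g₁) (h₂ : Integrable g₂) (x : V) :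
    ‖𝓕⁻ g₁ x - 𝓕⁻ g₂ x‖ ≤ ∫ ξ, ‖g₁ ξ - g₂ ξ‖ := by
  simp only [Real.fourierInv_eq_fourier_neg, Real.fourier_eq]
  rw [← integral_sub ((Real.fourierIntegral_convergent_iff _).2 h₁)
    ((Real.fourierIntegral_convergent_iff _).2 h₂)]
  refine (norm_integral_le_integral_norm _).trans_eq ?_
  simp_rw [← smul_sub, Circle.norm_smul]

theorem convolutionExistsAt_mul_of_bounded {A g : V → ℂ} (hA : Integrable A)
    (hg : AEStronglyMeasurable g) {C : ℝ} (hC : ∀ η, ‖g η‖ ≤ C) (ξ : V) :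
    ConvolutionExistsAt A g ξ (mul ℂ ℂ) :=
  BddAbove.convolutionExistsAt (mul ℂ ℂ) (s := Set.univ) ⟨C, by rintro _ ⟨η, -, rfl⟩; exact hC η⟩
    MeasurableSet.univ (Set.subset_univ _) hA.integrableOn hg

theorem norm_mul_convolution_sub_convolution_mul_le {m : V → ℂ} (hm : AEStronglyMeasurable m)
    {M : ℝ} (hM : ∀ ξ, ‖m ξ‖ ≤ M) (A B : 𝓢(V, ℂ)) {G F : V → ℝ} {ξ : V}
    (hGF : ∀ η, ‖m ξ - m η‖ * (‖A (ξ - η)‖ * ‖B η‖) ≤ G (ξ - η) * F η)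
    (hξ : ConvolutionExistsAt G F ξ (mul ℝ ℝ)) :
    ‖m ξ * (⇑A ⋆[mul ℂ ℂ] ⇑B) ξ - (⇑A ⋆[mul ℂ ℂ] fun η => m η * B η) ξ‖
      ≤ (G ⋆[mul ℝ ℝ] F) ξ := by
  obtain ⟨C, hC⟩ := B.toBoundedContinuousFunction.isBounded_range.exists_norm_le
  have hB : ∀ η, ‖B η‖ ≤ C := fun η => hC _ ⟨η, rfl⟩
  have h₁ := convolutionExistsAt_mul_of_bounded A.integrable
    B.continuous.aestronglyMeasurable hB ξ
  have h₂ := convolutionExistsAt_mul_of_bounded (g := fun η => m η * B η) A.integrable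
    (hm.mul B.continuous.aestronglyMeasurable) (C := M * C) (fun η => norm_mul_le_of_le (hM η) (hB η)) ξ
  simp only [ConvolutionExistsAt, convolution_def, mul_apply'] at h₁ h₂ hξ ⊢
  rw [← integral_const_mul, ← integral_sub (h₁.const_mul _) h₂]
  refine (norm_integral_le_integral_norm _).trans
    (integral_mono_of_nonneg (ae_of_all _ fun _ => norm_nonneg _) hξ (ae_of_all _ fun t => ?_))
  calc ‖m ξ * (A t * B (ξ - t)) - A t * (m (ξ - t) * B (ξ - t))‖
      = ‖m ξ - m (ξ - t)‖ * (‖A (ξ - (ξ - t))‖ * ‖B (ξ - t)‖) := by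
        rw [sub_sub_cancel, ← norm_mul, ← norm_mul]; ring_nf
    _ ≤ G t * F (ξ - t) := by simpa only [sub_sub_cancel] using hGF (ξ - t)

theorem norm_fourierMultiplier_commutator_le {m : V → ℂ} (hm : AEStronglyMeasurable m) {M : ℝ}
    (hM : ∀ ξ, ‖m ξ‖ ≤ M) (a f : 𝓢(V, ℂ)) {G F : V → ℝ} (hG : Integrable G) (hF : Integrable F)
    (hGF : ∀ ξ η, ‖m ξ - m η‖ * (‖𝓕 ⇑a (ξ - η)‖ * ‖𝓕 ⇑f η‖) ≤ G (ξ - η) * F η) (x : V) :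
    ‖𝓕⁻ (fun ξ => m ξ * 𝓕 (fun y => a y * f y) ξ) x - a x * 𝓕⁻ (fun ξ => m ξ * 𝓕 ⇑f ξ) x‖
      ≤ (∫ ξ, G ξ) * ∫ ξ, F ξ := by
  set A : 𝓢(V, ℂ) := 𝓕 a with hA
  set B : 𝓢(V, ℂ) := 𝓕 f with hB
  have ha : a x = 𝓕⁻ ⇑A x := by rw [← fourierInv_coe, hA, fourierInv_fourier_eq]
  have hmB : Integrable (fun ξ => m ξ * B ξ) := B.integrable.bdd_mul hm (ae_of_all _ hM)
  have hAB := (A.integrable (μ := volume)).integrable_convolution (mul ℂ ℂ) B.integrable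
  simp only [fourier_mul_eq_convolution, ← fourier_coe, ← hA, ← hB] at hGF ⊢
  rw [ha, ← fourierInv_convolution_mul A.integrable hmB]
  calc _ ≤ ∫ ξ, ‖m ξ * (⇑A ⋆[mul ℂ ℂ] ⇑B) ξ - (⇑A ⋆[mul ℂ ℂ] fun η => m η * B η) ξ‖ :=
        norm_fourierInv_sub_le (hAB.bdd_mul hm (ae_of_all _ hM))
          (A.integrable.integrable_convolution _ hmB) x
    _ ≤ ∫ ξ, (G ⋆[mul ℝ ℝ] F) ξ := by
        refine integral_mono_of_nonneg (ae_of_all _ fun _ => norm_nonneg _)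
          (hG.integrable_convolution _ hF) ?_
        filter_upwards [hG.ae_convolution_exists (mul ℝ ℝ) hF] with ξ hξ
        exact norm_mul_convolution_sub_convolution_mul_le hm hM A B (hGF ξ) hξ
    _ = (∫ ξ, G ξ) * ∫ ξ, F ξ := integral_convolution (mul ℝ ℝ) hG hF

end FourierMultiplier

section HilbertCommutator

open Real

theorem Real.measurable_sign : Measurable Real.sign :=
  Measurable.ite measurableSet_Iio measurable_const
    (Measurable.ite measurableSet_Ioi measurable_const measurable_const)

theorem Real.abs_sign_sub_sign_le_two (ξ η : ℝ) : |sign ξ - sign η| ≤ 2 := by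
  rcases sign_apply_eq ξ with h | h | h <;> rcases sign_apply_eq η with h' | h' | h' <;>
    norm_num [h, h']

theorem Real.abs_sign_sub_sign_mul_abs_le (ξ η : ℝ) : |sign ξ - sign η| * |η| ≤ 2 * |ξ - η| := by
  rcases lt_trichotomy ξ 0 with hξ | hξ | hξ <;> rcases lt_trichotomy η 0 with hη | hη | hη <;>
    simp [sign_of_neg, sign_of_pos, abs_of_neg, abs_of_pos, *] <;>
    cases abs_cases (ξ - η) <;> linarith

theorem Loo_le_of_forall_norm_le {h : ℝ → ℂ} {B : ℝ} (hB : ∀ x, ‖h x‖ ≤ B) : Loo h ≤ B := by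
  rw [Loo, eLpNorm_exponent_top]
  exact ENNReal.toReal_le_of_le_ofReal ((norm_nonneg _).trans (hB 0))
    (eLpNormEssSup_le_of_ae_bound (ae_of_all _ hB))

theorem Loo_hcomm_le (a f : 𝓢(ℝ, ℂ)) {G F : ℝ → ℝ} (hG : Integrable G) (hF : Integrable F)
    (hGF : ∀ ξ η, |sign ξ - sign η| * (‖𝓕 ⇑a (ξ - η)‖ * ‖𝓕 ⇑f η‖) ≤ G (ξ - η) * F η) :
    Loo (hcomm a f) ≤ (∫ ξ, G ξ) * ∫ ξ, F ξ := by
  have hsymbol : ∀ ξ η : ℝ,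
      ‖-Complex.I * (sign ξ : ℂ) - -Complex.I * (sign η : ℂ)‖ = |sign ξ - sign η| := by
    intro ξ η
    rw [← mul_sub, norm_mul, norm_neg, Complex.norm_I, one_mul, ← Complex.ofReal_sub,
      Complex.norm_real, Real.norm_eq_abs]
  have hbound : ∀ ξ : ℝ, ‖-Complex.I * (sign ξ : ℂ)‖ ≤ 1 := by
    intro ξ
    rw [norm_mul, norm_neg, Complex.norm_I, one_mul, Complex.norm_real, Real.norm_eq_abs]
    rcases sign_apply_eq ξ with h | h | h <;> norm_num [h]
  have hmeas : AEStronglyMeasurable fun ξ : ℝ => -Complex.I * (sign ξ : ℂ) :=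
    (measurable_const.mul (Complex.measurable_ofReal.comp measurable_sign)).aestronglyMeasurable
  exact Loo_le_of_forall_norm_le fun x =>
    norm_fourierMultiplier_commutator_le hmeas hbound a f hG hF
      (fun ξ η => by rw [hsymbol]; exact hGF ξ η) x

theorem SchwartzMap.norm_fourier_deriv (u : 𝓢(ℝ, ℂ)) (ξ : ℝ) :
    ‖𝓕 (deriv ⇑u) ξ‖ = 2 * π * |ξ| * ‖𝓕 ⇑u ξ‖ := by
  rw [Real.fourier_deriv u.integrable u.differentiable (derivCLM ℝ ℂ u).integrable]
  simp [abs_of_pos pi_pos]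

theorem SchwartzMap.abs_sign_sub_sign_mul_norm_fourier_le (u : 𝓢(ℝ, ℂ)) (ξ η : ℝ) :
    |sign ξ - sign η| * (‖𝓕 ⇑u (ξ - η)‖ * ‖𝓕 (deriv (deriv ⇑u)) η‖)
      ≤ 2 * ‖𝓕 (deriv ⇑u) (ξ - η)‖ * ‖𝓕 (deriv ⇑u) η‖ := by
  have hv : ‖𝓕 (deriv (deriv ⇑u)) η‖ = 2 * π * |η| * ‖𝓕 (deriv ⇑u) η‖ :=
    (derivCLM ℝ ℂ u).norm_fourier_deriv η
  rw [hv, u.norm_fourier_deriv (ξ - η)]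
  calc _ = 2 * π * (|sign ξ - sign η| * |η|) * (‖𝓕 ⇑u (ξ - η)‖ * ‖𝓕 (deriv ⇑u) η‖) := by ring
    _ ≤ 2 * π * (2 * |ξ - η|) * (‖𝓕 ⇑u (ξ - η)‖ * ‖𝓕 (deriv ⇑u) η‖) := by
        gcongr 2 * π * ?_ * _
        exact abs_sign_sub_sign_mul_abs_le ξ η
    _ = _ := by ring

end HilbertCommutator

section SobolevEmbedding

theorem hasTemperateGrowth_one_add_sq_rpow (r : ℝ) :
    (fun ξ : ℝ => (1 + ξ ^ 2) ^ r).HasTemperateGrowth := by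
  simpa [Real.norm_eq_abs, sq_abs] using Function.hasTemperateGrowth_one_add_norm_sq_rpow ℝ r

theorem memLp_two_one_add_sq_rpow_neg {s : ℝ} (hs : 1 / 2 < s) :
    MemLp (fun ξ : ℝ => (1 + ξ ^ 2) ^ (-s / 2)) 2 := by
  refine (memLp_two_iff_integrable_sq
    (hasTemperateGrowth_one_add_sq_rpow _).1.continuous.aestronglyMeasurable).2 ?_
  refine (integrable_rpow_neg_one_add_norm_sq (E := ℝ) (r := 2 * s) (by simp; linarith)).congr
    (ae_of_all _ fun ξ => ?_)
  dsimp only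
  rw [Real.norm_eq_abs, sq_abs, ← Real.rpow_mul_natCast (by positivity)]
  congr 1; push_cast; ring

theorem SchwartzMap.memLp_two_one_add_sq_rpow_mul_fourier (r : ℝ) (f : 𝓢(ℝ, ℂ)) :
    MemLp (fun ξ => (((1 + ξ ^ 2) ^ r : ℝ) : ℂ) * 𝓕 ⇑f ξ) 2 := by
  set w : ℝ → ℂ := fun ξ => (((1 + ξ ^ 2) ^ r : ℝ) : ℂ)
  have hw : w.HasTemperateGrowth := by
    have := hasTemperateGrowth_one_add_sq_rpow r
    fun_prop
  have := (smulLeftCLM ℂ w (𝓕 f : 𝓢(ℝ, ℂ))).memLp 2 (μ := volume)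
  rwa [smulLeftCLM_apply hw, fourier_coe] at this

theorem exists_integral_norm_fourier_le_sobolev {s : ℝ} (hs : 1 / 2 < s) :
    ∃ K : ℝ, ∀ f : 𝓢(ℝ, ℂ), ∫ ξ, ‖𝓕 ⇑f ξ‖ ≤ K * sobolev s f := by
  set φ : ℝ → ℝ := fun ξ => (1 + ξ ^ 2) ^ (-s / 2)
  refine ⟨(eLpNorm φ 2).toReal, fun f => ?_⟩
  set g : ℝ → ℂ := fun ξ => (((1 + ξ ^ 2) ^ (s / 2) : ℝ) : ℂ) * 𝓕 ⇑f ξ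
  have hφ : MemLp φ 2 := memLp_two_one_add_sq_rpow_neg hs
  have hg : MemLp g 2 := f.memLp_two_one_add_sq_rpow_mul_fourier (s / 2)
  have hφg : φ • g = 𝓕 ⇑f := by
    ext ξ
    rw [Pi.smul_apply', Complex.real_smul, ← mul_assoc, ← Complex.ofReal_mul,
      ← Real.rpow_add (by positivity), neg_div, neg_add_cancel, Real.rpow_zero, Complex.ofReal_one,
      one_mul]
  have hHolder := eLpNorm_smul_le_mul_eLpNorm hg.1 hφ.1 (p := 2) (q := 2) (r := 1)
  rw [hφg] at hHolder
  rw [sobolev, ← ENNReal.toReal_mul,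
    integral_norm_eq_lintegral_enorm (𝓕 f).continuous.aestronglyMeasurable,
    ← eLpNorm_one_eq_lintegral_enorm]
  exact ENNReal.toReal_mono (ENNReal.mul_ne_top hφ.eLpNorm_ne_top hg.eLpNorm_ne_top) hHolder

end SobolevEmbedding

theorem stmt3 (δ : ℝ) (hδ : 0 < δ) :
    ∃ C : ℝ, 0 < C ∧ ∀ u : 𝓢(ℝ, ℂ),
      Loo (hcomm (deriv ⇑u) (deriv ⇑u)) + Loo (hcomm ⇑u (iteratedDeriv 2 ⇑u))
        ≤ C * sobolev (1 / 2 + δ) (deriv ⇑u) ^ 2 := by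
  obtain ⟨K, hK⟩ := exists_integral_norm_fourier_le_sobolev (s := 1 / 2 + δ) (by linarith)
  refine ⟨4 * K ^ 2 + 1, by positivity, fun u => ?_⟩
  -- `⇑v` is `deriv ⇑u` by `rfl`, which the final `calc` uses
  set v := derivCLM ℝ ℂ u
  have hv : iteratedDeriv 2 ⇑u = ⇑(derivCLM ℝ ℂ v) := by
    rw [iteratedDeriv_succ, iteratedDeriv_one]; rfl
  set N := ∫ ξ, ‖𝓕 ⇑v ξ‖
  have hF : Integrable fun ξ => ‖𝓕 ⇑v ξ‖ := (fourier_coe v ▸ (𝓕 v).integrable).norm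
  have hG : ∫ ξ, 2 * ‖𝓕 ⇑v ξ‖ = 2 * N := integral_const_mul _ _
  have h₁ : Loo (hcomm v v) ≤ 2 * N * N :=
    hG ▸ Loo_hcomm_le v v (hF.const_mul 2) hF fun ξ η => by
      rw [← mul_assoc]; gcongr; exact Real.abs_sign_sub_sign_le_two ξ η
  have h₂ : Loo (hcomm u (derivCLM ℝ ℂ v)) ≤ 2 * N * N :=
    hG ▸ Loo_hcomm_le u _ (hF.const_mul 2) hF u.abs_sign_sub_sign_mul_norm_fourier_le
  have hN : N ≤ K * sobolev (1 / 2 + δ) v := hK v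
  have hN0 : 0 ≤ N := integral_nonneg fun _ => norm_nonneg _
  rw [hv]
  calc Loo (hcomm v v) + Loo (hcomm u (derivCLM ℝ ℂ v)) ≤ 2 * N * N + 2 * N * N := add_le_add h₁ h₂
    _ = 4 * N ^ 2 := by ring
    _ ≤ 4 * (K * sobolev (1 / 2 + δ) v) ^ 2 := by gcongr
    _ ≤ (4 * K ^ 2 + 1) * sobolev (1 / 2 + δ) v ^ 2 := by
        nlinarith [sq_nonneg (sobolev (1 / 2 + δ) v)]
end

section
/- For a Schwartz function a and a Schwartz function f on ℝ, if the Fourier transform of a is supported in {|ξ| ≤ R} and that of f is supported in {|ξ| ≥ 2R}, then [H, a]f = 0, i.e., the commutator of the Hilbert transform with multiplication by a annihilates f. -/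
open MeasureTheory SchwartzMap FourierTransform

/-!
With `m ξ = -i sgn ξ` we have `H f = 𝓕⁻ (m 𝓕f)`, and the inverse Fourier transform turns
convolution into multiplication, so `a f = 𝓕⁻ (𝓕a ⋆ 𝓕f)` and `a H f = 𝓕⁻ (𝓕a ⋆ m 𝓕f)`.
Under the frequency assumptions the symbol `m` is constant along each convolution integral:
`𝓕a ⋆ m 𝓕f = m (𝓕a ⋆ 𝓕f) = m 𝓕(a f)`, whence `a H f = H (a f)`.
-/

open Convolution ContinuousLinearMap

namespace Real

theorem monotone_sign : Monotone sign := by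
  intro s t hst
  unfold sign
  split_ifs <;> linarith

theorem measurable_sign_s16 : Measurable sign :=
  monotone_sign.measurable

theorem sign_add_eq_of_two_mul_abs_le {s t : ℝ} (h : 2 * |t| ≤ |s|) : sign (s + t) = sign s := by
  rcases lt_trichotomy s 0 with hs | rfl | hs
  · rw [abs_of_neg hs] at h
    rw [sign_of_neg hs, sign_of_neg (by linarith [le_abs_self t])]
  · rw [abs_zero] at h
    obtain rfl : t = 0 := abs_nonpos_iff.mp (by linarith [abs_nonneg t])
    rw [add_zero]
  · rw [abs_of_pos hs] at h
    rw [sign_of_pos hs, sign_of_pos (by linarith [neg_abs_le t])]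

variable {E : Type*} [NormedAddCommGroup E] [InnerProductSpace ℝ E] [FiniteDimensional ℝ E]
  [MeasurableSpace E] [BorelSpace E]

theorem fourierInv_convolution_eq {P G : E → ℂ} (hP : Integrable P) (hG : Integrable G) :
    𝓕⁻ (P ⋆[mul ℂ ℂ] G) = 𝓕⁻ P * 𝓕⁻ G := by
  ext x
  simp only [Pi.mul_apply, fourierInv_eq_fourier_neg, fourier_mul_convolution_eq hP hG]

end Real

namespace SchwartzMap

variable {E : Type*} [NormedAddCommGroup E] [InnerProductSpace ℝ E] [FiniteDimensional ℝ E]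
  [MeasurableSpace E] [BorelSpace E]

theorem fourierInv_fourier_coe {F : Type*} [NormedAddCommGroup F] [NormedSpace ℂ F]
    [CompleteSpace F] (g : 𝓢(E, F)) : 𝓕⁻ (𝓕 ⇑g) = ⇑g := by
  rw [← fourier_coe, ← fourierInv_coe, fourierInv_fourier_eq]

theorem fourierInv_fourier_convolution (φ : 𝓢(E, ℂ)) {G : E → ℂ} (hG : Integrable G) :
    𝓕⁻ (𝓕 ⇑φ ⋆[mul ℂ ℂ] G) = ⇑φ * 𝓕⁻ G := by
  rw [Real.fourierInv_convolution_eq (𝓕 φ).integrable hG, fourierInv_fourier_coe]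

theorem fourier_fourierInv_convolution (g h : 𝓢(E, ℂ)) :
    𝓕 (𝓕⁻ (⇑g ⋆[mul ℂ ℂ] ⇑h)) = ⇑g ⋆[mul ℂ ℂ] ⇑h := by
  have hconv : ⇑g ⋆[mul ℂ ℂ] ⇑h = ⇑(convolution (mul ℂ ℂ) g h) :=
    funext fun ξ => (convolution_apply _ g h ξ).symm
  rw [hconv, ← fourierInv_coe, ← fourier_coe, fourier_fourierInv_eq]

end SchwartzMap

theorem convolution_mul_eq_mul_convolution {E : Type*} [Sub E] [MeasurableSpace E] (μ : Measure E)
    {A G m : E → ℂ} {x : E} (h : ∀ t, A t ≠ 0 → G (x - t) ≠ 0 → m (x - t) = m x) :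
    (A ⋆[mul ℂ ℂ, μ] (m * G)) x = m x * (A ⋆[mul ℂ ℂ, μ] G) x := by
  simp only [convolution_def, ← integral_const_mul]
  congr 1 with t
  by_cases hA : A t = 0
  · simp [hA]
  by_cases hG : G (x - t) = 0
  · simp [hG]
  simp only [Pi.mul_apply, h t hA hG, mul_apply']
  ring

noncomputable def hilbertSymbol (ξ : ℝ) : ℂ := -Complex.I * Real.sign ξ

theorem hilbert_eq_fourierInv (f : ℝ → ℂ) : hilbert f = 𝓕⁻ (hilbertSymbol * 𝓕 f) := rfl

theorem norm_hilbertSymbol_le (ξ : ℝ) : ‖hilbertSymbol ξ‖ ≤ 1 := by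
  rw [hilbertSymbol, norm_mul, norm_neg, Complex.norm_I, one_mul, Complex.norm_real,
    Real.norm_eq_abs]
  rcases Real.sign_apply_eq ξ with h | h | h <;> simp [h]

theorem MeasureTheory.Integrable.hilbertSymbol_mul {G : ℝ → ℂ} (hG : Integrable G) :
    Integrable (hilbertSymbol * G) :=
  hG.bdd_mul
    ((Complex.measurable_ofReal.comp Real.measurable_sign_s16).const_mul _).aestronglyMeasurable
    (.of_forall norm_hilbertSymbol_le)

/-- Where `A t * G (ξ - t) ≠ 0` we have `|t| ≤ R ≤ |ξ - t| / 2`, so `ξ` and `ξ - t` have the same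
sign. -/
theorem convolution_hilbertSymbol_mul {R : ℝ} {A G : ℝ → ℂ} (hA : ∀ ξ, R < |ξ| → A ξ = 0)
    (hG : ∀ ξ, |ξ| < 2 * R → G ξ = 0) :
    A ⋆[mul ℂ ℂ] (hilbertSymbol * G) = hilbertSymbol * (A ⋆[mul ℂ ℂ] G) := by
  ext ξ
  refine convolution_mul_eq_mul_convolution _ fun t hAt hGt => ?_
  have h_far : 2 * |t| ≤ |ξ - t| := by
    linarith [not_lt.mp (mt (hA t) hAt), not_lt.mp (mt (hG _) hGt)]
  rw [hilbertSymbol, hilbertSymbol, ← Real.sign_add_eq_of_two_mul_abs_le h_far, sub_add_cancel]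

theorem stmt16_general (R : ℝ) (a f : 𝓢(ℝ, ℂ))
    (ha : ∀ ξ : ℝ, R < |ξ| → 𝓕 (⇑a) ξ = 0)
    (hf : ∀ ξ : ℝ, |ξ| < 2 * R → 𝓕 (⇑f) ξ = 0) :
    ∀ x : ℝ, hcomm ⇑a ⇑f x = 0 := by
  intro x
  have hF : Integrable (𝓕 ⇑f) := (𝓕 f).integrable
  have h_af : (fun y => a y * f y) = 𝓕⁻ (𝓕 ⇑a ⋆[mul ℂ ℂ] 𝓕 ⇑f) := by
    rw [fourierInv_fourier_convolution a hF, fourierInv_fourier_coe]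
    rfl
  have h_aHf : (fun y => a y * hilbert f y) = 𝓕⁻ (𝓕 ⇑a ⋆[mul ℂ ℂ] (hilbertSymbol * 𝓕 ⇑f)) := by
    rw [fourierInv_fourier_convolution a hF.hilbertSymbol_mul, hilbert_eq_fourierInv]
    rfl
  have h_inv : 𝓕 (𝓕⁻ (𝓕 ⇑a ⋆[mul ℂ ℂ] 𝓕 ⇑f)) = 𝓕 ⇑a ⋆[mul ℂ ℂ] 𝓕 ⇑f :=
    fourier_fourierInv_convolution (𝓕 a) (𝓕 f)
  rw [hcomm, hilbert_eq_fourierInv, h_af, h_inv,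
    ← convolution_hilbertSymbol_mul ha hf, ← h_aHf, sub_self]

/-- The commutator `[H, a]` annihilates functions at much higher frequency than `a`. -/
theorem stmt16 (R : ℝ) (hR : 0 < R) (a f : 𝓢(ℝ, ℂ))
    (ha : ∀ ξ : ℝ, R < |ξ| → 𝓕 (⇑a) ξ = 0)
    (hf : ∀ ξ : ℝ, |ξ| < 2 * R → 𝓕 (⇑f) ξ = 0) :
    ∀ x : ℝ, hcomm ⇑a ⇑f x = 0 :=
  stmt16_general R a f ha hf
end
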